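/- arXiv:1808.06525 — 5 statements merged into one kernel-verified Lean document; each statement's English description precedes it below -/
import Mathlib

section
/- Let f, h, Q : ℝ² → ℝ be smooth, with h(0)=0, {f,h}(0)=0, {f,{f,h}}(0) ≠ 0, and Q(0) ≠ 0. Then the quantity κ = {h,{f,h}}(0) / ({f,{f,h}}(0))² is unchanged when h is replaced by Q·h, i.e. {Q·h,{f,Q·h}}(0) / ({f,{f,Q·h}}(0))² = {h,{f,h}}(0) / ({f,{f,h}}(0))². -/
noncomputable def pdx (u : ℝ × ℝ → ℝ) (v : ℝ × ℝ) : ℝ := deriv (fun t => u (t, v.2)) v.1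
noncomputable def pdy (u : ℝ × ℝ → ℝ) (v : ℝ × ℝ) : ℝ := deriv (fun t => u (v.1, t)) v.2

noncomputable def pb (u v : ℝ × ℝ → ℝ) (p : ℝ × ℝ) : ℝ :=
  pdx u p * pdy v p - pdy u p * pdx v p

lemma hasDerivAt_x (u : ℝ × ℝ → ℝ) (hu : ContDiff ℝ (⊤ : ℕ∞) u) (p : ℝ × ℝ) :
    HasDerivAt (fun t => u (t, p.2)) (fderiv ℝ u p ((1:ℝ),(0:ℝ))) p.1 := by
  have h1 : HasDerivAt (fun t : ℝ => (t, p.2)) ((1:ℝ),(0:ℝ)) p.1 :=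
    (hasDerivAt_id p.1).prodMk (hasDerivAt_const p.1 p.2)
  have h2 := ((hu.differentiable (by simp) p).hasFDerivAt).comp_hasDerivAt p.1 (by simpa using h1)
  exact h2

lemma hasDerivAt_y (u : ℝ × ℝ → ℝ) (hu : ContDiff ℝ (⊤ : ℕ∞) u) (p : ℝ × ℝ) :
    HasDerivAt (fun t => u (p.1, t)) (fderiv ℝ u p ((0:ℝ),(1:ℝ))) p.2 := by
  have h1 : HasDerivAt (fun t : ℝ => (p.1, t)) ((0:ℝ),(1:ℝ)) p.2 :=
    (hasDerivAt_const p.2 p.1).prodMk (hasDerivAt_id p.2)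
  have h2 := ((hu.differentiable (by simp) p).hasFDerivAt).comp_hasDerivAt p.2 (by simpa using h1)
  exact h2

lemma pdx_eq (u : ℝ × ℝ → ℝ) (hu : ContDiff ℝ (⊤ : ℕ∞) u) (p : ℝ × ℝ) :
    pdx u p = fderiv ℝ u p ((1:ℝ),(0:ℝ)) := (hasDerivAt_x u hu p).deriv

lemma pdy_eq (u : ℝ × ℝ → ℝ) (hu : ContDiff ℝ (⊤ : ℕ∞) u) (p : ℝ × ℝ) :
    pdy u p = fderiv ℝ u p ((0:ℝ),(1:ℝ)) := (hasDerivAt_y u hu p).deriv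

lemma pdx_smooth (u : ℝ × ℝ → ℝ) (hu : ContDiff ℝ (⊤ : ℕ∞) u) : ContDiff ℝ (⊤ : ℕ∞) (pdx u) := by
  have : pdx u = fun p => fderiv ℝ u p ((1:ℝ),(0:ℝ)) := funext (pdx_eq u hu)
  rw [this]
  exact (hu.fderiv_right (by simp)).clm_apply contDiff_const

lemma pdy_smooth (u : ℝ × ℝ → ℝ) (hu : ContDiff ℝ (⊤ : ℕ∞) u) : ContDiff ℝ (⊤ : ℕ∞) (pdy u) := by
  have : pdy u = fun p => fderiv ℝ u p ((0:ℝ),(1:ℝ)) := funext (pdy_eq u hu)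
  rw [this]
  exact (hu.fderiv_right (by simp)).clm_apply contDiff_const

lemma pb_smooth (u v : ℝ × ℝ → ℝ) (hu : ContDiff ℝ (⊤ : ℕ∞) u) (hv : ContDiff ℝ (⊤ : ℕ∞) v) :
    ContDiff ℝ (⊤ : ℕ∞) (pb u v) :=
  ((pdx_smooth u hu).mul (pdy_smooth v hv)).sub ((pdy_smooth u hu).mul (pdx_smooth v hv))

lemma pdx_mul (u v : ℝ × ℝ → ℝ) (hu : ContDiff ℝ (⊤ : ℕ∞) u) (hv : ContDiff ℝ (⊤ : ℕ∞) v) (p : ℝ × ℝ) :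
    pdx (fun q => u q * v q) p = pdx u p * v p + u p * pdx v p := by
  have := ((hasDerivAt_x u hu p).mul (hasDerivAt_x v hv p)).deriv
  rw [pdx_eq u hu, pdx_eq v hv]
  simpa [pdx, Pi.mul_def, Pi.add_def] using this

lemma pdy_mul (u v : ℝ × ℝ → ℝ) (hu : ContDiff ℝ (⊤ : ℕ∞) u) (hv : ContDiff ℝ (⊤ : ℕ∞) v) (p : ℝ × ℝ) :
    pdy (fun q => u q * v q) p = pdy u p * v p + u p * pdy v p := by
  have := ((hasDerivAt_y u hu p).mul (hasDerivAt_y v hv p)).deriv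
  rw [pdy_eq u hu, pdy_eq v hv]
  simpa [pdy, Pi.mul_def, Pi.add_def] using this

lemma pdx_add (u v : ℝ × ℝ → ℝ) (hu : ContDiff ℝ (⊤ : ℕ∞) u) (hv : ContDiff ℝ (⊤ : ℕ∞) v) (p : ℝ × ℝ) :
    pdx (fun q => u q + v q) p = pdx u p + pdx v p := by
  have := ((hasDerivAt_x u hu p).add (hasDerivAt_x v hv p)).deriv
  rw [pdx_eq u hu, pdx_eq v hv]
  simpa [pdx, Pi.mul_def, Pi.add_def] using this

lemma pdy_add (u v : ℝ × ℝ → ℝ) (hu : ContDiff ℝ (⊤ : ℕ∞) u) (hv : ContDiff ℝ (⊤ : ℕ∞) v) (p : ℝ × ℝ) :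
    pdy (fun q => u q + v q) p = pdy u p + pdy v p := by
  have := ((hasDerivAt_y u hu p).add (hasDerivAt_y v hv p)).deriv
  rw [pdy_eq u hu, pdy_eq v hv]
  simpa [pdy, Pi.mul_def, Pi.add_def] using this

lemma pb_mul (a u v : ℝ × ℝ → ℝ) (hu : ContDiff ℝ (⊤ : ℕ∞) u) (hv : ContDiff ℝ (⊤ : ℕ∞) v) (p : ℝ × ℝ) :
    pb a (fun q => u q * v q) p = u p * pb a v p + v p * pb a u p := by
  simp only [pb, pdx_mul u v hu hv, pdy_mul u v hu hv]; ring

lemma pb_add (a u v : ℝ × ℝ → ℝ) (hu : ContDiff ℝ (⊤ : ℕ∞) u) (hv : ContDiff ℝ (⊤ : ℕ∞) v) (p : ℝ × ℝ) :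
    pb a (fun q => u q + v q) p = pb a u p + pb a v p := by
  simp only [pb, pdx_add u v hu hv, pdy_add u v hu hv]; ring

lemma pb_mul_left (a u v : ℝ × ℝ → ℝ) (hu : ContDiff ℝ (⊤ : ℕ∞) u) (hv : ContDiff ℝ (⊤ : ℕ∞) v) (p : ℝ × ℝ) :
    pb (fun q => u q * v q) a p = u p * pb v a p + v p * pb u a p := by
  simp only [pb, pdx_mul u v hu hv, pdy_mul u v hu hv]; ring

lemma pb_self (u : ℝ × ℝ → ℝ) (p : ℝ × ℝ) : pb u u p = 0 := by simp [pb]; ring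

theorem stmt2 (f h Q : ℝ × ℝ → ℝ) (hf : ContDiff ℝ (⊤ : ℕ∞) f) (hh : ContDiff ℝ (⊤ : ℕ∞) h)
    (hQ : ContDiff ℝ (⊤ : ℕ∞) Q) (h0 : h 0 = 0) (hfh0 : pb f h 0 = 0)
    (hffh : pb f (pb f h) 0 ≠ 0) (hQ0 : Q 0 ≠ 0) :
    pb (fun v => Q v * h v) (pb f (fun v => Q v * h v)) 0
        / (pb f (pb f (fun v => Q v * h v)) 0) ^ 2
      = pb h (pb f h) 0 / (pb f (pb f h) 0) ^ 2 := by
  set A := pb f (pb f h) 0 with hA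
  set B := pb h (pb f h) 0 with hB
  have hu : ContDiff ℝ (⊤ : ℕ∞) (pb f h) := pb_smooth f h hf hh
  have hw : ContDiff ℝ (⊤ : ℕ∞) (pb f Q) := pb_smooth f Q hf hQ
  -- e1 : pb f (Q*h) = Q * (pb f h) + h * (pb f Q)
  have e1 : pb f (fun v => Q v * h v)
      = fun p => Q p * pb f h p + h p * pb f Q p := by
    funext p
    rw [pb_mul f Q h hQ hh p]
  have hg1 : ContDiff ℝ (⊤ : ℕ∞) (fun p => Q p * pb f h p) := hQ.mul hu
  have hg2 : ContDiff ℝ (⊤ : ℕ∞) (fun p => h p * pb f Q p) := hh.mul hw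
  -- denominator
  have eden : pb f (pb f (fun v => Q v * h v)) 0 = Q 0 * A := by
    rw [e1, pb_add f _ _ hg1 hg2 0, pb_mul f Q (pb f h) hQ hu 0,
      pb_mul f h (pb f Q) hh hw 0]
    simp [h0, hfh0]
    exact Or.inl rfl
  -- inner bracket with h
  have ehg : pb h (pb f (fun v => Q v * h v)) 0 = Q 0 * B := by
    rw [e1, pb_add h _ _ hg1 hg2 0, pb_mul h Q (pb f h) hQ hu 0,
      pb_mul h h (pb f Q) hh hw 0]
    simp [h0, hfh0, pb_self]
    exact Or.inl rfl
  -- numerator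
  have enum : pb (fun v => Q v * h v) (pb f (fun v => Q v * h v)) 0
      = Q 0 * (Q 0 * B) := by
    rw [pb_mul_left (pb f (fun v => Q v * h v)) Q h hQ hh 0]
    rw [ehg]
    simp [h0]
  rw [eden, enum]
  field_simp
end

section
/- Let A, B : ℝ → ℝ be continuous functions such that for all x in a neighborhood of 0 in ℝ, (x + A(−x²))² + B(−x²) = 0. Then A(t) = 0 and B(t) = t for all t ≤ 0 in a neighborhood of 0. -/
/-! Comparing the identity at `x` and at `-x` kills its even part: `(x + a)² = (-x + a)²` forces
`4 x a = 0`, so `A` vanishes on `(-ε², 0)` and hence, by continuity, at `0` as well. The identity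
then reads `x² + B(-x²) = 0`. -/

open Set

theorem eq_zero_of_add_sq_eq_neg_add_sq {R : Type*} [CommRing R] [NoZeroDivisors R]
    [NeZero (2 : R)] {x a : R} (hx : x ≠ 0) (h : (x + a) ^ 2 = (-x + a) ^ 2) : a = 0 := by
  have h4 : (2 * 2 : R) * (x * a) = 0 := by linear_combination h
  simpa [hx, NeZero.ne] using h4

theorem exists_abs_lt_neg_sq_eq {ε t : ℝ} (hε : 0 < ε) (ht : -ε ^ 2 < t) (ht0 : t ≤ 0) :
    ∃ x : ℝ, |x| < ε ∧ -x ^ 2 = t := by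
  refine ⟨√(-t), ?_, ?_⟩
  · rw [abs_of_nonneg (Real.sqrt_nonneg _), Real.sqrt_lt' hε]
    linarith
  · rw [Real.sq_sqrt (neg_nonneg.2 ht0), neg_neg]

theorem stmt4_general (A B : ℝ → ℝ) (hA : Continuous A)
    (ε : ℝ) (hε : 0 < ε)
    (h : ∀ x : ℝ, |x| < ε → (x + A (-x ^ 2)) ^ 2 + B (-x ^ 2) = 0) :
    ∃ δ > 0, ∀ t : ℝ, -δ < t → t ≤ 0 → A t = 0 ∧ B t = t := by
  have hA_Ioo : EqOn A 0 (Ioo (-ε ^ 2) 0) := by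
    rintro t ⟨ht, ht0⟩
    obtain ⟨x, hxε, rfl⟩ := exists_abs_lt_neg_sq_eq hε ht ht0.le
    have hx : x ≠ 0 := by rintro rfl; simp at ht0
    have hneg := h (-x) (by rwa [abs_neg])
    rw [neg_sq] at hneg
    exact eq_zero_of_add_sq_eq_neg_add_sq hx (by linear_combination h x hxε - hneg)
  have hA_Icc : EqOn A 0 (Icc (-ε ^ 2) 0) := by
    rw [← closure_Ioo (by nlinarith : -ε ^ 2 ≠ 0)]
    exact hA_Ioo.closure hA continuous_const
  refine ⟨ε ^ 2, by positivity, fun t ht ht0 => ?_⟩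
  obtain ⟨x, hxε, rfl⟩ := exists_abs_lt_neg_sq_eq hε ht ht0
  have hAt : A (-x ^ 2) = 0 := hA_Icc ⟨ht.le, ht0⟩
  refine ⟨hAt, ?_⟩
  linear_combination h x hxε - (2 * x + A (-x ^ 2)) * hAt

theorem stmt4 (A B : ℝ → ℝ) (hA : Continuous A) (hB : Continuous B)
    (ε : ℝ) (hε : 0 < ε)
    (h : ∀ x : ℝ, |x| < ε → (x + A (-x ^ 2)) ^ 2 + B (-x ^ 2) = 0) :
    ∃ δ > 0, ∀ t : ℝ, -δ < t → t ≤ 0 → A t = 0 ∧ B t = t :=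
  stmt4_general A B hA ε hε h
end

section
/- Let g : ℝ → ℝ be smooth with g'(0) ≠ 0, and on ℝ² consider the Poisson bracket {u,v} = (u_x v_y − u_y v_x)/g'(y) associated with the symplectic form ω = g'(y) dx∧dy. Set f(x,y) = g(y) and h(x,y) = y + x². Then {f,h}(0) = 0, {f,{f,h}}(0) = 2, {h,{f,h}}(0) = 2/g'(0), and consequently κ := {h,{f,h}}(0)/({f,{f,h}}(0))² = 1/(2g'(0)). -/
/-- Poisson bracket of ω = g'(y) dx∧dy. -/
noncomputable def pbg (g : ℝ → ℝ) (u v : ℝ × ℝ → ℝ) (p : ℝ × ℝ) : ℝ :=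
  (pdx u p * pdy v p - pdy u p * pdx v p) / deriv g p.2

theorem stmt8 (g : ℝ → ℝ) (hg : ContDiff ℝ (⊤ : ℕ∞) g) (hg' : deriv g 0 ≠ 0) :
    let f : ℝ × ℝ → ℝ := fun v => g v.2
    let h : ℝ × ℝ → ℝ := fun v => v.2 + v.1 ^ 2
    pbg g f h 0 = 0 ∧ pbg g f (pbg g f h) 0 = 2 ∧
      pbg g h (pbg g f h) 0 = 2 / deriv g 0 ∧
      pbg g h (pbg g f h) 0 / (pbg g f (pbg g f h) 0) ^ 2 = 1 / (2 * deriv g 0) := by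

  intro f h
  have hf_x : ∀ t s : ℝ, pdx f (t, s) = 0 := by
    intro t s; simp [pdx, f]
  have hf_y : ∀ t s : ℝ, pdy f (t, s) = deriv g s := by
    intro t s; simp [pdy, f]
  have hh_x : ∀ t s : ℝ, pdx h (t, s) = 2 * t := by
    intro t s
    simp [pdx, h, deriv_const_add]
  have hh_y : ∀ t s : ℝ, pdy h (t, s) = 1 := by
    intro t s
    simp [pdy, h, deriv_add_const]
  have hF0 : ∀ t : ℝ, pbg g f h (t, 0) = -2 * t := by
    intro t
    simp only [pbg, hf_x, hf_y, hh_x, hh_y]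
    field_simp
    ring
  have hF0' : ∀ s : ℝ, pbg g f h (0, s) = 0 := by
    intro s
    simp [pbg, hf_x, hf_y, hh_x, hh_y]
  have hFx : pdx (pbg g f h) ((0:ℝ), (0:ℝ)) = -2 := by
    have e : (fun t => pbg g f h (t, ((0:ℝ),(0:ℝ)).2)) = fun t => -2 * t := by
      funext t; exact hF0 t
    rw [pdx, e, deriv_const_mul_field]
    simp
  have hFy : pdy (pbg g f h) ((0:ℝ), (0:ℝ)) = 0 := by
    have e : (fun s => pbg g f h (((0:ℝ),(0:ℝ)).1, s)) = fun _ => (0:ℝ) := by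
      funext s; exact hF0' s
    rw [pdy, e]
    simp
  have g1 : pbg g f h 0 = 0 := by have := hF0 0; simp at this; exact this
  have g2 : pbg g f (pbg g f h) 0 = 2 := by
    show pbg g f (pbg g f h) ((0:ℝ),(0:ℝ)) = 2
    rw [pbg, hf_x, hf_y, hFx, hFy]
    field_simp
    ring
  have g3 : pbg g h (pbg g f h) 0 = 2 / deriv g 0 := by
    show pbg g h (pbg g f h) ((0:ℝ),(0:ℝ)) = 2 / deriv g 0
    rw [pbg, hh_x, hh_y, hFx, hFy]
    ring
  refine ⟨g1, g2, g3, ?_⟩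
  rw [g2, g3]
  field_simp
end

section
/- On ℝ⁴, let F be smooth in (y,p,q) with F_y(0) ≠ 0, let ω = dx∧dF + dp∧dq, f = F(y,p,q), h = y + x², and let {·,·} denote the Poisson bracket of ω (so {u,v} = Z_u(v) where Z_u ⌟ ω = du). Then {f,h} = 2x, {f,{f,h}} = 2 identically, and {h,{f,h}}(0) = 2/F_y(0). Consequently κ := {h,{f,h}}(0)/({f,{f,h}}(0))² = 1/(2 F_y(0)). -/
/-- Partial derivatives of a function of (y,p,q) ∈ ℝ×ℝ×ℝ. -/
noncomputable def py (u : ℝ × ℝ × ℝ → ℝ) (v : ℝ × ℝ × ℝ) : ℝ :=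
  deriv (fun t => u (t, v.2.1, v.2.2)) v.1
noncomputable def pp (u : ℝ × ℝ × ℝ → ℝ) (v : ℝ × ℝ × ℝ) : ℝ :=
  deriv (fun t => u (v.1, t, v.2.2)) v.2.1
noncomputable def pq (u : ℝ × ℝ × ℝ → ℝ) (v : ℝ × ℝ × ℝ) : ℝ :=
  deriv (fun t => u (v.1, v.2.1, t)) v.2.2

/-- The 2-form ω = dx∧dF(y,p,q) + dp∧dq on ℝ⁴ with coordinates (x,y,p,q),
evaluated at the point w on tangent vectors a, b. -/
noncomputable def omF (F : ℝ × ℝ × ℝ → ℝ) (w : ℝ × ℝ × ℝ × ℝ) (a b : ℝ × ℝ × ℝ × ℝ) : ℝ :=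
  py F w.2 * (a.1 * b.2.1 - a.2.1 * b.1) +
  pp F w.2 * (a.1 * b.2.2.1 - a.2.2.1 * b.1) +
  pq F w.2 * (a.1 * b.2.2.2 - a.2.2.2 * b.1) +
  (a.2.2.1 * b.2.2.2 - a.2.2.2 * b.2.2.1)

lemma aux_py (F : ℝ × ℝ × ℝ → ℝ) (hF : Differentiable ℝ F) (v : ℝ × ℝ × ℝ) :
    py F v = fderiv ℝ F v (1, 0, 0) := by
  have h1 : HasDerivAt (fun t : ℝ => (t, v.2.1, v.2.2)) ((1:ℝ), (0:ℝ), (0:ℝ)) v.1 :=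
    HasDerivAt.prodMk (hasDerivAt_id v.1) (HasDerivAt.prodMk (hasDerivAt_const _ _) (hasDerivAt_const _ _))
  have h2 := ((hF v).hasFDerivAt).comp_hasDerivAt v.1 h1
  exact h2.deriv

lemma aux_pp (F : ℝ × ℝ × ℝ → ℝ) (hF : Differentiable ℝ F) (v : ℝ × ℝ × ℝ) :
    pp F v = fderiv ℝ F v (0, 1, 0) := by
  have h1 : HasDerivAt (fun t : ℝ => (v.1, t, v.2.2)) ((0:ℝ), (1:ℝ), (0:ℝ)) v.2.1 :=
    HasDerivAt.prodMk (hasDerivAt_const _ _) (HasDerivAt.prodMk (hasDerivAt_id _) (hasDerivAt_const _ _))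
  have h2 := ((hF v).hasFDerivAt).comp_hasDerivAt v.2.1 h1
  exact h2.deriv

lemma aux_pq (F : ℝ × ℝ × ℝ → ℝ) (hF : Differentiable ℝ F) (v : ℝ × ℝ × ℝ) :
    pq F v = fderiv ℝ F v (0, 0, 1) := by
  have h1 : HasDerivAt (fun t : ℝ => (v.1, v.2.1, t)) ((0:ℝ), (0:ℝ), (1:ℝ)) v.2.2 :=
    HasDerivAt.prodMk (hasDerivAt_const _ _) (HasDerivAt.prodMk (hasDerivAt_const _ _) (hasDerivAt_id _))
  have h2 := ((hF v).hasFDerivAt).comp_hasDerivAt v.2.2 h1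
  exact h2.deriv

lemma aux_fderivF (F : ℝ × ℝ × ℝ → ℝ) (hF : Differentiable ℝ F) (v u : ℝ × ℝ × ℝ) :
    fderiv ℝ F v u = u.1 * py F v + u.2.1 * pp F v + u.2.2 * pq F v := by
  have hu : u = u.1 • ((1:ℝ), (0:ℝ), (0:ℝ)) + u.2.1 • ((0:ℝ), (1:ℝ), (0:ℝ))
      + u.2.2 • ((0:ℝ), (0:ℝ), (1:ℝ)) := by
    ext <;> simp
  rw [aux_py F hF, aux_pp F hF, aux_pq F hF]
  conv_lhs => rw [hu]
  rw [map_add, map_add, map_smul, map_smul, map_smul]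
  simp only [smul_eq_mul]

lemma aux_f (F : ℝ × ℝ × ℝ → ℝ) (hF : Differentiable ℝ F) (w a : ℝ × ℝ × ℝ × ℝ) :
    fderiv ℝ (fun w : ℝ × ℝ × ℝ × ℝ => F w.2) w a = fderiv ℝ F w.2 a.2 := by
  have h1 : HasFDerivAt (fun w : ℝ × ℝ × ℝ × ℝ => F w.2)
      ((fderiv ℝ F w.2).comp (ContinuousLinearMap.snd ℝ ℝ (ℝ × ℝ × ℝ))) w :=
    ((hF w.2).hasFDerivAt).comp w (ContinuousLinearMap.snd ℝ ℝ (ℝ × ℝ × ℝ)).hasFDerivAt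
  rw [h1.fderiv]; rfl

lemma aux_h (w a : ℝ × ℝ × ℝ × ℝ) :
    fderiv ℝ (fun w : ℝ × ℝ × ℝ × ℝ => w.2.1 + w.1 ^ 2) w a = a.2.1 + 2 * w.1 * a.1 := by
  have h1 : HasFDerivAt (fun w : ℝ × ℝ × ℝ × ℝ => w.2.1)
      ((ContinuousLinearMap.fst ℝ ℝ (ℝ × ℝ)).comp (ContinuousLinearMap.snd ℝ ℝ (ℝ × ℝ × ℝ))) w :=
    ((ContinuousLinearMap.fst ℝ ℝ (ℝ × ℝ)).comp
      (ContinuousLinearMap.snd ℝ ℝ (ℝ × ℝ × ℝ))).hasFDerivAt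
  have h2 : HasFDerivAt (fun w : ℝ × ℝ × ℝ × ℝ => w.1 ^ 2)
      ((2 * w.1) • (ContinuousLinearMap.fst ℝ ℝ (ℝ × ℝ × ℝ))) w := by
    have := ((hasDerivAt_pow 2 w.1).comp_hasFDerivAt w
      (ContinuousLinearMap.fst ℝ ℝ (ℝ × ℝ × ℝ)).hasFDerivAt)
    simp at this; exact this
  have := (h1.add h2).fderiv
  rw [show (fun w : ℝ × ℝ × ℝ × ℝ => w.2.1 + w.1 ^ 2) = ((fun w => w.2.1) + fun w => w.1 ^ 2) from rfl, this]; simp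

theorem stmt15 (F : ℝ × ℝ × ℝ → ℝ) (hF : ContDiff ℝ (⊤ : ℕ∞) F)
    (hFy : ∀ v, py F v ≠ 0)
    (f h : ℝ × ℝ × ℝ × ℝ → ℝ)
    (hf : f = fun w => F w.2) (hh : h = fun w => w.2.1 + w.1 ^ 2)
    (Zf Zh : ℝ × ℝ × ℝ × ℝ → ℝ × ℝ × ℝ × ℝ)
    (hZf : ∀ w a, omF F w (Zf w) a = fderiv ℝ f w a)
    (hZh : ∀ w a, omF F w (Zh w) a = fderiv ℝ h w a) :
    -- {f,h} = Z_f(h) = 2x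
    (∀ w, fderiv ℝ h w (Zf w) = 2 * w.1) ∧
    -- {f,{f,h}} = 2 identically
    (∀ w, fderiv ℝ (fun w' => fderiv ℝ h w' (Zf w')) w (Zf w) = 2) ∧
    -- {h,{f,h}}(0) = 2 / F_y(0)
    fderiv ℝ (fun w' => fderiv ℝ h w' (Zf w')) 0 (Zh 0) = 2 / py F 0 ∧
    -- κ = 1 / (2 F_y(0))
    fderiv ℝ (fun w' => fderiv ℝ h w' (Zf w')) 0 (Zh 0) /
        (fderiv ℝ (fun w' => fderiv ℝ h w' (Zf w')) 0 (Zf 0)) ^ 2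
      = 1 / (2 * py F 0) := by
  have hFd : Differentiable ℝ F := hF.differentiable (by simp)
  subst hf hh
  -- fderiv of f and h on basis vectors
  have hfder : ∀ (w a : ℝ × ℝ × ℝ × ℝ),
      fderiv ℝ (fun w : ℝ × ℝ × ℝ × ℝ => F w.2) w a
        = a.2.1 * py F w.2 + a.2.2.1 * pp F w.2 + a.2.2.2 * pq F w.2 := by
    intro w a
    rw [aux_f F hFd, aux_fderivF F hFd]
  have hhder := aux_h
  -- components of Zf
  have hZf1 : ∀ w, (Zf w).1 = 1 := by
    intro w
    have := hZf w ((0:ℝ), (1:ℝ), (0:ℝ), (0:ℝ))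
    rw [hfder] at this
    simp only [omF] at this
    have h2 : py F w.2 * (Zf w).1 = py F w.2 * 1 := by linarith [this]
    exact mul_left_cancel₀ (hFy w.2) h2
  have hZfq : ∀ w, (Zf w).2.2.2 = 0 := by
    intro w
    have := hZf w ((0:ℝ), (0:ℝ), (1:ℝ), (0:ℝ))
    rw [hfder] at this
    simp only [omF, hZf1 w] at this
    linarith [this]
  have hZfp : ∀ w, (Zf w).2.2.1 = 0 := by
    intro w
    have := hZf w ((0:ℝ), (0:ℝ), (0:ℝ), (1:ℝ))
    rw [hfder] at this
    simp only [omF, hZf1 w] at this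
    linarith [this]
  have hZfy : ∀ w, (Zf w).2.1 = 0 := by
    intro w
    have := hZf w ((1:ℝ), (0:ℝ), (0:ℝ), (0:ℝ))
    rw [hfder] at this
    simp only [omF, hZf1 w, hZfp w, hZfq w] at this
    have h2 : py F w.2 * (Zf w).2.1 = py F w.2 * 0 := by linarith [this]
    exact mul_left_cancel₀ (hFy w.2) h2
  -- first claim
  have c1 : ∀ w : ℝ × ℝ × ℝ × ℝ,
      fderiv ℝ (fun w : ℝ × ℝ × ℝ × ℝ => w.2.1 + w.1 ^ 2) w (Zf w) = 2 * w.1 := by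
    intro w
    rw [hhder, hZfy w, hZf1 w]; ring
  -- the bracket function equals 2x
  have hg : (fun w' : ℝ × ℝ × ℝ × ℝ =>
      fderiv ℝ (fun w : ℝ × ℝ × ℝ × ℝ => w.2.1 + w.1 ^ 2) w' (Zf w')) = fun w => 2 * w.1 := by
    funext w; exact c1 w
  have hgder : ∀ (w a : ℝ × ℝ × ℝ × ℝ),
      fderiv ℝ (fun w : ℝ × ℝ × ℝ × ℝ => 2 * w.1) w a = 2 * a.1 := by
    intro w a
    have h1 : HasFDerivAt (fun w : ℝ × ℝ × ℝ × ℝ => 2 * w.1)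
        ((2:ℝ) • (ContinuousLinearMap.fst ℝ ℝ (ℝ × ℝ × ℝ))) w := by
      exact ((2:ℝ) • (ContinuousLinearMap.fst ℝ ℝ (ℝ × ℝ × ℝ))).hasFDerivAt
    rw [h1.fderiv]; simp
  -- Zh first component at 0
  have hZh1 : py F (0 : ℝ × ℝ × ℝ) * (Zh 0).1 = 1 := by
    have := hZh 0 ((0:ℝ), (1:ℝ), (0:ℝ), (0:ℝ))
    rw [hhder] at this
    simp only [omF] at this
    simp at this
    linarith [this]
  have hp := hFy (0 : ℝ × ℝ × ℝ)
  refine ⟨c1, ?_, ?_, ?_⟩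
  · intro w
    rw [hg, hgder, hZf1 w]; norm_num
  · rw [hg, hgder]
    rw [eq_div_iff hp]
    linear_combination 2 * hZh1
  · rw [hg, hgder, hgder, hZf1 0]
    have hz : (Zh 0).1 = 1 / py F 0 := by
      field_simp
      linear_combination hZh1
    rw [hz]
    field_simp
end

section
/- Let Φ(x,y) = (x + A(y), B(y)) be a smooth local diffeomorphism germ of ℝ² at 0 (so B(0)=0, B'(0) ≠ 0) that maps the set {(x,y) : y + x² = 0} into itself near the origin. Then A(y) = 0 and B(y) = y for all y ≤ 0 near 0. -/
theorem stmt18 (A B : ℝ → ℝ) (hA : ContDiff ℝ (⊤ : ℕ∞) A) (hB : ContDiff ℝ (⊤ : ℕ∞) B)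
    (hB0 : B 0 = 0) (hB' : deriv B 0 ≠ 0) (ε : ℝ) (hε : 0 < ε)
    -- Φ(x,y) = (x + A(y), B(y)) maps {y + x² = 0} into itself near the origin
    (hmap : ∀ v : ℝ × ℝ, ‖v‖ < ε → v.2 + v.1 ^ 2 = 0 →
      B v.2 + (v.1 + A v.2) ^ 2 = 0) :
    ∃ δ > 0, ∀ y : ℝ, -δ < y → y ≤ 0 → A y = 0 ∧ B y = y := by
  refine ⟨min (ε^2/4) (ε/2), by positivity, ?_⟩
  intro y hy hy0
  set x := Real.sqrt (-y) with hxdef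
  have hx0 : 0 ≤ x := Real.sqrt_nonneg _
  have hxy : x ^ 2 = -y := Real.sq_sqrt (by linarith)
  have hyε : -y < ε := by
    have := min_le_right (ε^2/4) (ε/2); linarith
  have hxε : x < ε := by
    have h1 : -y ≤ ε^2/4 := by
      have := min_le_left (ε^2/4) (ε/2); linarith
    have h2 : x ≤ Real.sqrt (ε^2/4) := Real.sqrt_le_sqrt h1
    have h3 : Real.sqrt (ε^2/4) = ε/2 := by
      rw [show ε^2/4 = (ε/2)^2 by ring, Real.sqrt_sq (by linarith)]
    linarith
  have hn1 : ‖((x, y) : ℝ × ℝ)‖ < ε := by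
    rw [Prod.norm_def]
    simp only [Real.norm_eq_abs]
    rw [abs_of_nonneg hx0, abs_of_nonpos hy0]
    exact max_lt hxε hyε
  have hn2 : ‖((-x, y) : ℝ × ℝ)‖ < ε := by
    rw [Prod.norm_def]
    simp only [Real.norm_eq_abs]
    rw [abs_neg, abs_of_nonneg hx0, abs_of_nonpos hy0]
    exact max_lt hxε hyε
  have hc : y + x ^ 2 = 0 := by linarith
  have h1 := hmap (x, y) hn1 hc
  have h2 := hmap (-x, y) hn2 (by simpa using hc)
  simp only at h1 h2
  rcases eq_or_lt_of_le hx0 with h | hxpos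
  · have hy00 : y = 0 := by nlinarith
    subst hy00
    constructor
    · nlinarith [h1]
    · exact hB0
  · have hAy : A y = 0 := by nlinarith
    exact ⟨hAy, by nlinarith⟩
end
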